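/- Let p be a prime and R a Noetherian commutative ring of characteristic p whose Frobenius endomorphism r ↦ r^p is flat (for example, a regular ring). Fix e ≥ 1 and let (M,F) be a finitely generated unit R[F^e]-module. Then every ascending chain N₁ ⊆ N₂ ⊆ N₃ ⊆ … of unit R[F^e]-submodules of M (R-submodules N_i with R·F(N_i) = N_i) stabilizes: there is an index i₀ such that N_i = N_{i₀} for all i ≥ i₀. -/

import Mathlib

open TensorProduct

/-- A copy of `R` whose `R`-module structure is twisted by the ring endomorphism `φ`:
`r • r' = φ r * r'`.  For `φ` the `e`-th Frobenius iterate this is the bimodule `R^e`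
of Lyubeznik/Blickle, i.e. the left tensor factor of the Frobenius functor `F^{e*}`. -/
def Twisted (R : Type) [CommRing R] (φ : R →+* R) : Type := R

instance (R : Type) [CommRing R] (φ : R →+* R) : AddCommGroup (Twisted R φ) :=
  inferInstanceAs (AddCommGroup R)

instance (R : Type) [CommRing R] (φ : R →+* R) : Module R (Twisted R φ) :=
  Module.compHom R φ

/-- The element of the twisted copy of `R` corresponding to `r`. -/
def tw {R : Type} [CommRing R] (φ : R →+* R) (r : R) : Twisted R φ := r

/-- `R·F(N)` : the `R`-submodule of `M` generated by the image of `N` under `F`.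
`R·F^j(N)` is its `j`-fold iterate `(spanF F)^[j] N`. -/
def spanF {R M : Type} [CommRing R] [AddCommGroup M] [Module R M]
    (F : M → M) (N : Submodule R M) : Submodule R M :=
  Submodule.span R (F '' (N : Set M))

/-- `(M, F)` is a *unit* `R[Fᵉ]`-module: the linearization
`θ : R ⊗_φ M → M`, `r ⊗ m ↦ r • F m`, is bijective. -/
def IsUnitFModule {R M : Type} [CommRing R] [AddCommGroup M] [Module R M]
    (φ : R →+* R) (F : M → M) : Prop :=
  ∃ θ : Twisted R φ ⊗[R] M →+ M,
    (∀ (r : R) (m : M), θ (tw φ r ⊗ₜ[R] m) = r • F m) ∧ Function.Bijective θ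

/-- `(M, F)` is a finitely generated `R[Fᵉ]`-module: there is a finite subset
`S ⊆ M` such that the elements `F^[j] s`, `j ≥ 0`, `s ∈ S`, generate `M` as an
`R`-module. -/
def IsFGFModule (R : Type) {M : Type} [CommRing R] [AddCommGroup M] [Module R M]
    (F : M → M) : Prop :=
  ∃ S : Finset M, Submodule.span R (⋃ j : ℕ, F^[j] '' (S : Set M)) = ⊤

/-!
Because `θ` is bijective, `R·F(N)` is the image under `θ` of `R ⊗_φ N ⊆ R ⊗_φ M`, and the
functor `R ⊗_φ -` is exact since Frobenius is flat; hence `N ↦ R·F(N)` commutes with finite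
intersections. Fix a root `B` of `M`. For a unit submodule `N` this gives
`N ∩ R·Fʲ(B) = R·Fʲ(N ∩ B)`, and as the `R·Fʲ(B)` increase to `M`, `N` is the union of the
`R·Fʲ(N ∩ B)`: a unit submodule is determined by its trace on `B`. An ascending chain of unit
submodules therefore stabilises together with its traces on the Noetherian module `B`.
-/

variable {R M : Type} [CommRing R] [AddCommGroup M] [Module R M]

lemma RingHom.pow_apply_eq_pow_pow {p : ℕ} {f : R →+* R} (hf : ∀ r, f r = r ^ p) (n : ℕ)
    (r : R) : (f ^ n) r = r ^ p ^ n := by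
  induction n generalizing r with
  | zero => simp
  | succ n ih =>
    rw [pow_succ, RingHom.mul_def, RingHom.comp_apply, ih, hf, ← pow_mul, ← pow_succ']

lemma RingHom.Flat.pow {f : R →+* R} (hf : f.Flat) (n : ℕ) : (f ^ n).Flat := by
  induction n with
  | zero => exact RingHom.Flat.id R
  | succ n ih => rw [pow_succ, RingHom.mul_def]; exact hf.comp ih

lemma RingHom.Flat.twisted {φ : R →+* R} (hφ : φ.Flat) : Module.Flat R (Twisted R φ) := hφ

section Flat

variable {T : Type} [AddCommGroup T] [Module R T]

lemma ker_lTensor_prod {N P : Type} [AddCommGroup N] [Module R N] [AddCommGroup P] [Module R P]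
    (f : M →ₗ[R] N) (g : M →ₗ[R] P) :
    LinearMap.ker (LinearMap.lTensor T (f.prod g))
      = LinearMap.ker (LinearMap.lTensor T f) ⊓ LinearMap.ker (LinearMap.lTensor T g) := by
  have h : (TensorProduct.prodRight R R T N P).toLinearMap ∘ₗ LinearMap.lTensor T (f.prod g)
      = (LinearMap.lTensor T f).prod (LinearMap.lTensor T g) := by
    exact TensorProduct.ext' fun t m => by simp
  rw [← LinearMap.ker_prod, ← h, LinearEquiv.ker_comp]

lemma Module.Flat.range_lTensor_subtype_inf [Module.Flat R T] (A C : Submodule R M) :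
    LinearMap.range (LinearMap.lTensor T (A ⊓ C).subtype)
      = LinearMap.range (LinearMap.lTensor T A.subtype)
        ⊓ LinearMap.range (LinearMap.lTensor T C.subtype) := by
  have hker : LinearMap.ker (A.mkQ.prod C.mkQ) = A ⊓ C := by
    rw [LinearMap.ker_prod, Submodule.ker_mkQ, Submodule.ker_mkQ]
  have hAC := Module.Flat.lTensor_exact T (LinearMap.exact_subtype_ker_map (A.mkQ.prod C.mkQ))
  rw [hker] at hAC
  rw [← hAC.linearMap_ker_eq, ker_lTensor_prod,
    (Module.Flat.lTensor_exact T (LinearMap.exact_subtype_mkQ A)).linearMap_ker_eq,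
    (Module.Flat.lTensor_exact T (LinearMap.exact_subtype_mkQ C)).linearMap_ker_eq]

end Flat

section spanF

lemma spanF_mono (F : M → M) : Monotone (spanF (R := R) F) :=
  fun _ _ h => Submodule.span_mono (Set.image_mono h)

variable {φ : R →+* R} (f : M →ₛₗ[φ] M)

lemma spanF_span (T : Set M) : spanF f (Submodule.span R T) = Submodule.span R (f '' T) := by
  refine le_antisymm ?_ (Submodule.span_mono (Set.image_mono Submodule.subset_span))
  rw [spanF, Submodule.span_le]
  rintro _ ⟨x, hx, rfl⟩
  induction hx using Submodule.span_induction with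
  | mem y hy => exact Submodule.subset_span ⟨y, hy, rfl⟩
  | zero => simp
  | add x y _ _ hx hy => rw [map_add]; exact add_mem hx hy
  | smul r x _ hx => rw [map_smulₛₗ]; exact Submodule.smul_mem _ _ hx

lemma iterate_spanF_span (j : ℕ) (T : Set M) :
    (spanF f)^[j] (Submodule.span R T) = Submodule.span R (f^[j] '' T) := by
  induction j with
  | zero => simp
  | succ j ih =>
    rw [Function.iterate_succ_apply', ih, spanF_span, Function.iterate_succ', Set.image_comp]

lemma spanF_iSup {ι : Type*} (A : ι → Submodule R M) :
    spanF f (⨆ i, A i) = ⨆ i, spanF f (A i) := by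
  rw [Submodule.iSup_eq_span, spanF_span, Set.image_iUnion, Submodule.span_iUnion]
  rfl

lemma Submodule.FG.spanF {A : Submodule R M} (hA : A.FG) : (spanF f A).FG := by
  obtain ⟨s, rfl⟩ := hA
  rw [spanF_span]
  exact Submodule.fg_span (s.finite_toSet.image f)

end spanF

section Unit

variable {φ : R →+* R} (F : M → M) (θ : Twisted R φ ⊗[R] M →+ M)
  (hθ : ∀ (r : R) (m : M), θ (tw φ r ⊗ₜ[R] m) = r • F m)
include hθ

lemma image_range_lTensor_subtype_eq_spanF (A : Submodule R M) :
    θ '' LinearMap.range (LinearMap.lTensor (Twisted R φ) A.subtype) = spanF F A := by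
  apply Set.Subset.antisymm
  · rintro _ ⟨_, ⟨y, rfl⟩, rfl⟩
    induction y with
    | zero => simp
    | tmul t a =>
      exact hθ t a ▸ Submodule.smul_mem _ _ (Submodule.subset_span ⟨a, a.2, rfl⟩)
    | add y z hy hz => rw [map_add, map_add]; exact add_mem hy hz
  · intro x hx
    obtain ⟨l, hl, rfl⟩ := (Finsupp.mem_span_image_iff_linearCombination R).mp hx
    refine ⟨l.sum fun m c => tw φ c ⊗ₜ m,
      Submodule.sum_mem _ fun m hm => ⟨tw φ (l m) ⊗ₜ ⟨m, hl hm⟩, rfl⟩, ?_⟩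
    simp only [map_finsuppSum, hθ]
    rfl

lemma spanF_top_of_surjective (hsurj : Function.Surjective θ) :
    spanF F (⊤ : Submodule R M) = ⊤ := by
  have hrange : LinearMap.range (LinearMap.lTensor (Twisted R φ) (⊤ : Submodule R M).subtype)
      = ⊤ :=
    LinearMap.range_eq_top.mpr (LinearMap.lTensor_surjective _ fun m => ⟨⟨m, trivial⟩, rfl⟩)
  rw [← SetLike.coe_set_eq, ← image_range_lTensor_subtype_eq_spanF F θ hθ, hrange,
    Submodule.top_coe, Set.image_univ, hsurj.range_eq, Submodule.top_coe]

lemma spanF_inf_of_injective [Module.Flat R (Twisted R φ)] (hinj : Function.Injective θ)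
    (A C : Submodule R M) : spanF F (A ⊓ C) = spanF F A ⊓ spanF F C := by
  have himage := image_range_lTensor_subtype_eq_spanF F θ hθ
  rw [← SetLike.coe_set_eq, Submodule.coe_inf, ← himage, ← himage, ← himage,
    ← Set.image_inter hinj, ← Submodule.coe_inf, Module.Flat.range_lTensor_subtype_inf]

end Unit

section Root

structure IsRoot (F : M → M) (B : Submodule R M) : Prop where
  fg : B.FG
  le_spanF : B ≤ spanF F B
  iSup_iterate_spanF : ⨆ j, (spanF F)^[j] B = ⊤

lemma Submodule.FG.exists_le_of_le_iSup {N : Submodule R M} (hN : N.FG) {ι : Type*}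
    [Nonempty ι] {P : ι → Submodule R M} (hP : Directed (· ≤ ·) P) (h : N ≤ ⨆ i, P i) :
    ∃ i, N ≤ P i := by
  obtain ⟨_, ⟨i, rfl⟩, hi⟩ :=
    (CompleteLattice.isCompactElement_iff_le_of_directed_sSup_le _ N).mp
      ((Submodule.fg_iff_compact N).mp hN) (Set.range P) (Set.range_nonempty P)
      hP.directedOn_range h
  exact ⟨i, hi⟩

/-- `N₀ + R·F(N₀) + ⋯ + R·Fᵏ(N₀)`. -/
def sumIterateSpanF (F : M → M) (N₀ : Submodule R M) : ℕ → Submodule R M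
  | 0 => N₀
  | k + 1 => N₀ ⊔ spanF F (sumIterateSpanF F N₀ k)

variable (F : M → M) (N₀ : Submodule R M)

lemma monotone_sumIterateSpanF : Monotone (sumIterateSpanF F N₀) := by
  refine monotone_nat_of_le_succ fun k => ?_
  induction k with
  | zero => exact le_sup_left
  | succ k ih => exact sup_le_sup_left (spanF_mono F ih) N₀

lemma iterate_spanF_le_sumIterateSpanF (k : ℕ) :
    (spanF F)^[k] N₀ ≤ sumIterateSpanF F N₀ k := by
  induction k with
  | zero => exact le_rfl
  | succ k ih =>
    rw [Function.iterate_succ_apply']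
    exact le_sup_of_le_right (spanF_mono F ih)

variable {φ : R →+* R} (f : M →ₛₗ[φ] M) {N₀}

lemma Submodule.FG.sumIterateSpanF (hN₀ : N₀.FG) (k : ℕ) : (sumIterateSpanF f N₀ k).FG := by
  induction k with
  | zero => exact hN₀
  | succ k ih => exact hN₀.sup (ih.spanF f)

theorem exists_isRoot (htop : spanF f (⊤ : Submodule R M) = ⊤) (hN₀ : N₀.FG)
    (hgen : ⨆ j, (spanF f)^[j] N₀ = ⊤) : ∃ B : Submodule R M, IsRoot f B := by
  set P := sumIterateSpanF f N₀
  have hPmono : Monotone P := monotone_sumIterateSpanF f N₀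
  have hP : ⨆ k, P k = ⊤ :=
    top_unique (hgen ▸ iSup_mono (iterate_spanF_le_sumIterateSpanF f N₀))
  -- `M = R·F(M)` is the increasing union of the `R·F(P k)`; the f.g. `N₀` lies in one of them.
  obtain ⟨k, hk⟩ : ∃ k, N₀ ≤ spanF f (P k) :=
    hN₀.exists_le_of_le_iSup ((spanF_mono f).comp hPmono).directed_le
      (by rw [← spanF_iSup, hP, htop]; exact le_top)
  refine ⟨P k, hN₀.sumIterateSpanF f k, ?_, ?_⟩
  · calc P k ≤ P (k + 1) := hPmono k.le_succ
      _ = spanF f (P k) := sup_eq_right.mpr hk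
  · exact top_unique (hgen ▸ iSup_mono fun j => (spanF_mono f).iterate j (hPmono k.zero_le))

end Root

section ACC

variable {F : M → M} {B : Submodule R M}

lemma IsRoot.eq_iSup_iterate_spanF_inf (hB : IsRoot F B)
    (hinf : ∀ A C : Submodule R M, spanF F (A ⊓ C) = spanF F A ⊓ spanF F C)
    {N : Submodule R M} (hN : spanF F N = N) : N = ⨆ j, (spanF F)^[j] (N ⊓ B) := by
  have hmono : Monotone fun j => (spanF F)^[j] B := by
    refine monotone_nat_of_le_succ fun j => ?_
    rw [Function.iterate_succ_apply]
    exact (spanF_mono F).iterate j hB.le_spanF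
  have hinf_iterate : ∀ j, N ⊓ (spanF F)^[j] B = (spanF F)^[j] (N ⊓ B) := by
    intro j
    induction j with
    | zero => rfl
    | succ j ih =>
      rw [Function.iterate_succ_apply', Function.iterate_succ_apply', ← ih, hinf, hN]
  calc N = N ⊓ ⨆ j, (spanF F)^[j] B := by rw [hB.iSup_iterate_spanF, inf_top_eq]
    _ = ⨆ j, N ⊓ (spanF F)^[j] B := hmono.directed_le.inf_iSup_eq
    _ = ⨆ j, (spanF F)^[j] (N ⊓ B) := iSup_congr hinf_iterate

lemma exists_inf_eq_of_monotone [IsNoetherian R B] {N : ℕ → Submodule R M} (hN : Monotone N) :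
    ∃ i₀, ∀ i, i₀ ≤ i → N i ⊓ B = N i₀ ⊓ B := by
  obtain ⟨i₀, h⟩ := monotone_stabilizes_iff_noetherian.mpr ‹_›
    ⟨fun i => (N i).comap B.subtype, fun _ _ hij => Submodule.comap_mono (hN hij)⟩
  refine ⟨i₀, fun i hi => ?_⟩
  rw [inf_comm, ← Submodule.map_comap_subtype, inf_comm, ← Submodule.map_comap_subtype]
  exact congrArg (Submodule.map B.subtype) (h i hi).symm

theorem IsRoot.exists_eq_of_monotone [IsNoetherianRing R] (hB : IsRoot F B)
    (hinf : ∀ A C : Submodule R M, spanF F (A ⊓ C) = spanF F A ⊓ spanF F C)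
    {N : ℕ → Submodule R M} (hmono : Monotone N) (hN : ∀ i, spanF F (N i) = N i) :
    ∃ i₀, ∀ i, i₀ ≤ i → N i = N i₀ := by
  have : IsNoetherian R B := isNoetherian_of_fg_of_noetherian B hB.fg
  obtain ⟨i₀, h⟩ := exists_inf_eq_of_monotone (B := B) hmono
  refine ⟨i₀, fun i hi => ?_⟩
  rw [hB.eq_iSup_iterate_spanF_inf hinf (hN i), hB.eq_iSup_iterate_spanF_inf hinf (hN i₀),
    h i hi]

end ACC

theorem unit_submodule_acc_general
    (p : ℕ)
    (R : Type) [CommRing R] [IsNoetherianRing R]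
    (φp : R →+* R) (hφp : ∀ r : R, φp r = r ^ p) (hflat : φp.Flat)
    (M : Type) [AddCommGroup M] [Module R M]
    (e : ℕ)
    (φ : R →+* R) (hφ : ∀ r : R, φ r = r ^ p ^ e)
    (F : M → M) (hFadd : ∀ x y : M, F (x + y) = F x + F y)
    (hFsl : ∀ (r : R) (m : M), F (r • m) = r ^ p ^ e • F m)
    (hunit : IsUnitFModule φ F) (hfg : IsFGFModule R F)
    (N : ℕ → Submodule R M) (hmono : Monotone N)
    (hN : ∀ i, spanF F (N i) = N i) :
    ∃ i₀ : ℕ, ∀ i, i₀ ≤ i → N i = N i₀ := by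
  obtain ⟨θ, hθ, hθbij⟩ := hunit
  obtain ⟨S, hS⟩ := hfg
  let f : M →ₛₗ[φ] M :=
    { toFun := F, map_add' := hFadd, map_smul' := fun r m => by rw [hFsl, hφ] }
  have hφ_flat : φ.Flat := by
    rw [show φ = φp ^ e from RingHom.ext fun r => by rw [hφ, RingHom.pow_apply_eq_pow_pow hφp]]
    exact hflat.pow e
  have := hφ_flat.twisted
  obtain ⟨B, hB⟩ := exists_isRoot f (spanF_top_of_surjective F θ hθ hθbij.surjective)
    (Submodule.fg_span S.finite_toSet)
    (by rw [← hS, Submodule.span_iUnion]; exact iSup_congr fun j => iterate_spanF_span f j _)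
  exact hB.exists_eq_of_monotone (spanF_inf_of_injective F θ hθ hθbij.injective) hmono hN

/-- Over a Noetherian ring of characteristic `p` with flat
Frobenius, a finitely generated unit `R[Fᵉ]`-module satisfies the ascending chain
condition on unit `R[Fᵉ]`-submodules. -/
theorem unit_submodule_acc
    (p : ℕ) [Fact p.Prime]
    (R : Type) [CommRing R] [IsNoetherianRing R] [CharP R p]
    (φp : R →+* R) (hφp : ∀ r : R, φp r = r ^ p) (hflat : φp.Flat)
    (M : Type) [AddCommGroup M] [Module R M]
    (e : ℕ) (he : 1 ≤ e)
    (φ : R →+* R) (hφ : ∀ r : R, φ r = r ^ p ^ e)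
    (F : M → M) (hFadd : ∀ x y : M, F (x + y) = F x + F y)
    (hFsl : ∀ (r : R) (m : M), F (r • m) = r ^ p ^ e • F m)
    (hunit : IsUnitFModule φ F) (hfg : IsFGFModule R F)
    (N : ℕ → Submodule R M) (hmono : Monotone N)
    (hN : ∀ i, spanF F (N i) = N i) :
    ∃ i₀ : ℕ, ∀ i, i₀ ≤ i → N i = N i₀ :=
  unit_submodule_acc_general p R φp hφp hflat M e φ hφ F hFadd hFsl hunit hfg N hmono hN
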